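/- Gevrey series form a star subalgebra: if f, g ∈ ℂ[[t,q,p]] have convergent formal Borel transforms β(f), β(g) ∈ ℂ{ξ,q,p}, then β(f ⋆ g) ∈ ℂ{ξ,q,p}, where ⋆ is the Moyal normal-order star product. -/

import Mathlib

open Finset

/-- The Moyal normal-order star product on `ℂ[[t,q,p]]` in coefficient form:
`f i j l` is the coefficient of `q^i p^j t^l`. -/
noncomputable def star (f g : ℕ → ℕ → ℕ → ℂ) : ℕ → ℕ → ℕ → ℂ := fun i j l =>
  ∑ k ∈ range (l + 1), ∑ n ∈ range (l - k + 1), ∑ i1 ∈ range (i + 1), ∑ j1 ∈ range (j + 1),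
    (1 / (k.factorial : ℂ)) *
      (((j1 + k).factorial : ℂ) / (j1.factorial : ℂ)) * f i1 (j1 + k) n *
      ((((i - i1) + k).factorial : ℂ) / ((i - i1).factorial : ℂ)) * g ((i - i1) + k) (j - j1) (l - k - n)

/-- The formal Borel transform `β`: `t^k ↦ ξ^k/k!`. -/
noncomputable def borelT (f : ℕ → ℕ → ℕ → ℂ) : ℕ → ℕ → ℕ → ℂ :=
  fun i j k => f i j k / (k.factorial : ℂ)

/-- A power series is convergent iff its coefficients admit a geometric bound. -/
def IsConvergent (f : ℕ → ℕ → ℕ → ℂ) : Prop :=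
  ∃ C R : ℝ, 0 < C ∧ 0 < R ∧ ∀ i j k, ‖f i j k‖ ≤ C * R ^ (i + j + k)

open scoped Nat

/-!
Write the hypotheses as Gevrey bounds `‖f i j k‖ ≤ C R^(i+j+k) k!`. In a term of order `k`
of `f ⋆ g` the factors `(b+k)!/b!` and `(m+k)!/m!` produced by `∂_p^k` and `∂_q^k` are at most
`2^(·) k!` (a binomial coefficient is at most a power of two); one `k!` cancels the `1/k!` of the
Moyal product, and the other combines with the Gevrey factorials `n!`, `r!` of `f` and `g` into
`k! n! r! ≤ (k+n+r)! = l!`. So every term is `O(C² (4R²)^(i+j+l) l!)`, and there are at most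
`4^(i+j+l)` terms: the factor `l!` is exactly what the Borel transform removes.
-/

theorem Nat.add_factorial_le_two_pow_mul (a k : ℕ) : (a + k)! ≤ 2 ^ (a + k) * (a ! * k !) := by
  rw [← Nat.add_choose_mul_factorial_mul_factorial a k, mul_assoc]
  exact Nat.mul_le_mul_right _ (Nat.choose_le_two_pow _ _)

theorem Nat.factorial_mul_factorial_mul_factorial_le (k n r : ℕ) :
    k ! * n ! * r ! ≤ (k + n + r)! :=
  calc k ! * n ! * r ! ≤ (k + n)! * r ! :=
        Nat.mul_le_mul_right _ <|
          Nat.le_of_dvd (Nat.factorial_pos _) (Nat.factorial_mul_factorial_dvd_factorial_add k n)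
    _ ≤ (k + n + r)! :=
        Nat.le_of_dvd (Nat.factorial_pos _) (Nat.factorial_mul_factorial_dvd_factorial_add _ _)

theorem factorial_star_term_le (b m k n r : ℕ) :
    (b + k)! * (m + k)! * (n ! * r !) ≤
      2 ^ (b + k) * 2 ^ (m + k) * (b ! * m ! * k ! * (k + n + r)!) :=
  calc (b + k)! * (m + k)! * (n ! * r !)
      ≤ (2 ^ (b + k) * (b ! * k !)) * (2 ^ (m + k) * (m ! * k !)) * (n ! * r !) := by
        gcongr <;> exact Nat.add_factorial_le_two_pow_mul _ _
    _ = 2 ^ (b + k) * 2 ^ (m + k) * (b ! * m ! * k ! * (k ! * n ! * r !)) := by ring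
    _ ≤ 2 ^ (b + k) * 2 ^ (m + k) * (b ! * m ! * k ! * (k + n + r)!) := by
        gcongr; exact Nat.factorial_mul_factorial_mul_factorial_le k n r

theorem norm_sum_le_card_mul {ι E : Type*} [SeminormedAddCommGroup E] {s : Finset ι}
    {u : ι → E} {B : ℝ} {c : ℕ} (hc : #s ≤ c) (hB : 0 ≤ B) (h : ∀ x ∈ s, ‖u x‖ ≤ B) :
    ‖∑ x ∈ s, u x‖ ≤ c * B :=
  calc ‖∑ x ∈ s, u x‖ ≤ #s * B := by simpa using norm_sum_le_of_le s h
    _ ≤ c * B := by gcongr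

theorem norm_borelT_le_iff {f : ℕ → ℕ → ℕ → ℂ} {i j k : ℕ} {B : ℝ} :
    ‖borelT f i j k‖ ≤ B ↔ ‖f i j k‖ ≤ B * k ! := by
  rw [borelT, norm_div, Complex.norm_natCast, div_le_iff₀ (by positivity)]

theorem IsConvergent.exists_common_bound {f g : ℕ → ℕ → ℕ → ℂ} (hf : IsConvergent f)
    (hg : IsConvergent g) : ∃ C R : ℝ, 0 < C ∧ 1 ≤ R ∧
      ∀ i j k, ‖f i j k‖ ≤ C * R ^ (i + j + k) ∧ ‖g i j k‖ ≤ C * R ^ (i + j + k) := by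
  obtain ⟨C₁, R₁, hC₁, hR₁, hf⟩ := hf
  obtain ⟨C₂, R₂, hC₂, hR₂, hg⟩ := hg
  refine ⟨max C₁ C₂, max (max R₁ R₂) 1, lt_max_of_lt_left hC₁, le_max_right _ _,
    fun i j k => ⟨(hf i j k).trans ?_, (hg i j k).trans ?_⟩⟩ <;> gcongr <;> simp

section StarEstimate

variable {f g : ℕ → ℕ → ℕ → ℂ} {C R : ℝ}

theorem norm_star_term_le (hC : 0 ≤ C) (hR : 1 ≤ R)
    (hf : ∀ x y z, ‖f x y z‖ ≤ C * R ^ (x + y + z) * z !)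
    (hg : ∀ x y z, ‖g x y z‖ ≤ C * R ^ (x + y + z) * z !)
    {i j l a b m d k n r : ℕ} (hi : a + m = i) (hj : b + d = j) (hl : k + n + r = l) :
    ‖(1 / (k ! : ℂ)) * (((b + k)! : ℂ) / (b ! : ℂ)) * f a (b + k) n *
        (((m + k)! : ℂ) / (m ! : ℂ)) * g (m + k) d r‖ ≤
      C ^ 2 * (4 * R ^ 2) ^ (i + j + l) * l ! := by
  have hfac : ((b + k)! * (m + k)! * (n ! * r !) : ℝ) / (k ! * b ! * m !) ≤
      2 ^ (b + k) * 2 ^ (m + k) * l ! := by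
    rw [div_le_iff₀ (by positivity), ← hl]
    exact_mod_cast (factorial_star_term_le b m k n r).trans_eq (by ring)
  subst hi hj hl
  calc _ = ‖f a (b + k) n‖ * ‖g (m + k) d r‖ * ((b + k)! * (m + k)! / (k ! * b ! * m !)) := by
        simp only [norm_mul, norm_div, norm_one, Complex.norm_natCast]
        field_simp
    _ ≤ (C * R ^ (a + (b + k) + n) * n !) * (C * R ^ (m + k + d + r) * r !) *
          ((b + k)! * (m + k)! / (k ! * b ! * m !)) := by
        gcongr
        exacts [hf _ _ _, hg _ _ _]
    _ = C ^ 2 * R ^ (a + m + (b + d) + (k + n + r) + k) *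
          (((b + k)! * (m + k)! * (n ! * r !) : ℝ) / (k ! * b ! * m !)) := by ring
    _ ≤ C ^ 2 * R ^ (2 * (a + m + (b + d) + (k + n + r))) *
          (2 ^ (2 * (a + m + (b + d) + (k + n + r))) * (k + n + r)!) := by
        gcongr ?_ * ?_
        · gcongr
          omega
        · refine hfac.trans ?_
          rw [← pow_add]
          gcongr
          · norm_num
          · omega
    _ = C ^ 2 * (4 * R ^ 2) ^ (a + m + (b + d) + (k + n + r)) * (k + n + r)! := by
        rw [mul_pow, pow_mul, pow_mul]
        norm_num
        ring

theorem norm_star_le (hC : 0 ≤ C) (hR : 1 ≤ R)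
    (hf : ∀ x y z, ‖f x y z‖ ≤ C * R ^ (x + y + z) * z !)
    (hg : ∀ x y z, ‖g x y z‖ ≤ C * R ^ (x + y + z) * z !) (i j l : ℕ) :
    ‖star f g i j l‖ ≤ C ^ 2 * (16 * R ^ 2) ^ (i + j + l) * l ! := by
  set B := C ^ 2 * (4 * R ^ 2) ^ (i + j + l) * (l ! : ℝ)
  have hB : 0 ≤ B := by positivity
  have hcount : (l + 1) * ((l + 1) * ((i + 1) * (j + 1))) ≤ 4 ^ (i + j + l) :=
    calc (l + 1) * ((l + 1) * ((i + 1) * (j + 1))) ≤ 2 ^ l * (2 ^ l * (2 ^ i * 2 ^ j)) := by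
          gcongr <;> exact Nat.lt_two_pow_self
      _ = 2 ^ (l + l + i + j) := by ring
      _ ≤ 2 ^ (2 * (i + j + l)) := Nat.pow_le_pow_right two_pos (by omega)
      _ = 4 ^ (i + j + l) := by rw [pow_mul]; rfl
  calc ‖star f g i j l‖
      ≤ ((l + 1 : ℕ) : ℝ) * (((l + 1 : ℕ) : ℝ) *
          (((i + 1 : ℕ) : ℝ) * (((j + 1 : ℕ) : ℝ) * B))) := by
        unfold _root_.star
        refine norm_sum_le_card_mul (by simp) (by positivity) fun k hk => ?_
        refine norm_sum_le_card_mul (by simp only [card_range]; omega) (by positivity)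
          fun n hn => ?_
        refine norm_sum_le_card_mul (by simp) (by positivity) fun i₁ hi₁ => ?_
        refine norm_sum_le_card_mul (by simp) hB fun j₁ hj₁ => ?_
        simp only [mem_range] at hk hn hi₁ hj₁
        exact norm_star_term_le hC hR hf hg (by omega) (by omega) (by omega)
    _ = (((l + 1) * ((l + 1) * ((i + 1) * (j + 1))) : ℕ) : ℝ) * B := by push_cast; ring
    _ ≤ 4 ^ (i + j + l) * B := by gcongr; exact_mod_cast hcount
    _ = C ^ 2 * (16 * R ^ 2) ^ (i + j + l) * l ! := by
        rw [show (16 : ℝ) * R ^ 2 = 4 * (4 * R ^ 2) by ring, mul_pow]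
        ring

end StarEstimate

/-- Gevrey series form a `⋆`-subalgebra: if `β(f)` and `β(g)` are
convergent, then so is `β(f ⋆ g)`. -/
theorem gevrey_star_closed (f g : ℕ → ℕ → ℕ → ℂ)
    (hf : IsConvergent (borelT f)) (hg : IsConvergent (borelT g)) :
    IsConvergent (borelT (star f g)) := by
  obtain ⟨C, R, hC, hR, hfg⟩ := hf.exists_common_bound hg
  refine ⟨C ^ 2, 16 * R ^ 2, by positivity, by positivity, fun i j l => ?_⟩
  exact norm_borelT_le_iff.2 <| norm_star_le hC.le hR
    (fun x y z => norm_borelT_le_iff.1 (hfg x y z).1)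
    (fun x y z => norm_borelT_le_iff.1 (hfg x y z).2) i j l
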